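/- Let q = 5, ε ∈ (0, 1/2], let n ≥ 2 be even, and let ρ ≥ 1 be a real number such that α_ε^{1/ρ} ≥ 1/(2 cos(π/5)). Then the minimum of Qⁿ(ρ, P) over all probability mass functions P on (ZMod 5)ⁿ equals 5^{−n/2}; equivalently, E_x^n(ρ) := −(ρ/n) log₂ min_P Qⁿ(ρ, P) = ρ log₂ √5. -/

import Mathlib

/-- The typewriter channel transition probabilities on `ZMod q`. -/
noncomputable def W (q : ℕ) (ε : ℝ) (y x : ZMod q) : ℝ :=
  if y = x then 1 - ε else if y = x + 1 then ε else 0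

/-- `α_ε = √(ε(1-ε))`. -/
noncomputable def alphaE (ε : ℝ) : ℝ := Real.sqrt (ε * (1 - ε))

/-- Single-letter Bhattacharyya kernel `g₁(a,b) = Σ_y √(W(y|a) W(y|b))`. -/
noncomputable def g1 (q : ℕ) [NeZero q] (ε : ℝ) (a b : ZMod q) : ℝ :=
  ∑ y : ZMod q, Real.sqrt (W q ε y a * W q ε y b)

/-- `gₙ(x,x') = ∏ₖ g₁(xₖ, x'ₖ)`. -/
noncomputable def gn (q : ℕ) [NeZero q] (n : ℕ) (ε : ℝ) (x x' : Fin n → ZMod q) : ℝ :=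
  ∏ k, g1 q ε (x k) (x' k)

/-- The quadratic form `Qⁿ(ρ, P) = Σ_{x,x'} P(x)P(x') gₙ(x,x')^{1/ρ}`
(real `rpow`, so `0^{1/ρ} = 0` for `ρ ≥ 1`). -/
noncomputable def Qn (q : ℕ) [NeZero q] (n : ℕ) (ε ρ : ℝ)
    (P : (Fin n → ZMod q) → ℝ) : ℝ :=
  ∑ x : Fin n → ZMod q, ∑ x' : Fin n → ZMod q,
    P x * P x' * (gn q n ε x x') ^ (1 / ρ)

/-!
The lower bound is Lovász's umbrella argument for the pentagon. The kernel on `ZMod 5` equal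
to `1` at `0`, to `(√5 - 1)/2 = 1/(2 cos(π/5))` at `±1` and to `0` at `±2` is the Gram kernel of
three vectors whose first coordinate is the constant `5^(-1/4)`; under the hypothesis on `ρ` it
is dominated entrywise by `g₁^(1/ρ)`. Its tensor power is again a Gram kernel, so `Qⁿ(ρ, P)` is
at least a sum of squares, one of which is `(∑ₓ P(x) 5^(-n/4))² = 5^(-n/2)`.

The upper bound is Shannon's zero-error code `{(a, 2a)}` for the pentagon: its `n/2`-fold power
has `5^(n/2)` pairwise non-confusable words, and the uniform distribution on them attains
`5^(-n/2)`.
-/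

open Real Finset

section Gram
variable {ι α τ : Type*} [Fintype ι] [DecidableEq ι] [Fintype α] [Fintype τ]

theorem sum_sum_mul_prod_gram_eq_sum_sq (v : τ → α → ℝ) (P : (ι → α) → ℝ) :
    ∑ x, ∑ x', P x * P x' * ∏ k, ∑ t, v t (x k) * v t (x' k)
      = ∑ f : ι → τ, (∑ x, P x * ∏ k, v (f k) (x k)) ^ 2 := by
  set T : (ι → τ) → (ι → α) → ℝ := fun f x => P x * ∏ k, v (f k) (x k)
  calc ∑ x, ∑ x', P x * P x' * ∏ k, ∑ t, v t (x k) * v t (x' k)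
      = ∑ x, ∑ x', ∑ f, T f x * T f x' := by
        simp only [T, Fintype.prod_sum, Finset.prod_mul_distrib, Finset.mul_sum]
        refine sum_congr rfl fun x _ => sum_congr rfl fun x' _ => sum_congr rfl fun f _ => ?_
        ring
    _ = ∑ f, ∑ x, ∑ x', T f x * T f x' := by
        simp only [Finset.sum_comm (γ := ι → τ)]
    _ = ∑ f, (∑ x, T f x) ^ 2 := by simp only [sq, Finset.sum_mul_sum]

theorem sq_sum_mul_prod_le_sum_sum_mul_prod_gram (v : τ → α → ℝ) (t₀ : τ)
    (P : (ι → α) → ℝ) :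
    (∑ x, P x * ∏ k, v t₀ (x k)) ^ 2
      ≤ ∑ x, ∑ x', P x * P x' * ∏ k, ∑ t, v t (x k) * v t (x' k) := by
  rw [sum_sum_mul_prod_gram_eq_sum_sq]
  exact Finset.single_le_sum (f := fun f : ι → τ => (∑ x, P x * ∏ k, v (f k) (x k)) ^ 2)
    (fun _ _ => sq_nonneg _) (Finset.mem_univ fun _ => t₀)

end Gram

section Pushforward
variable {R ι X : Type*} [CommSemiring R] [Fintype ι] [Fintype X] [DecidableEq X]

theorem sum_pushforward_mul (c : ι → X) (p : ι → R) (g : X → R) :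
    ∑ x, (∑ i, if c i = x then p i else 0) * g x = ∑ i, p i * g (c i) := by
  simp only [Finset.sum_mul, ite_mul, zero_mul]
  rw [Finset.sum_comm]
  simp

theorem sum_sum_pushforward_mul (c : ι → X) (p : ι → R) (F : X → X → R) :
    ∑ x, ∑ x', (∑ i, if c i = x then p i else 0) * (∑ j, if c j = x' then p j else 0) * F x x'
      = ∑ i, ∑ j, p i * p j * F (c i) (c j) := by
  simp only [mul_assoc, ← Finset.mul_sum, sum_pushforward_mul]

end Pushforward

theorem gn_append {q : ℕ} [NeZero q] {m n : ℕ} (ε : ℝ) (x x' : Fin m → ZMod q)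
    (y y' : Fin n → ZMod q) :
    gn q (m + n) ε (Fin.append x y) (Fin.append x' y') = gn q m ε x x' * gn q n ε y y' := by
  simp [gn, Fin.prod_univ_add]

theorem zmod_five_cases : ∀ c : ZMod 5, c = 0 ∨ c = 1 ∨ c = 2 ∨ c = 3 ∨ c = 4 := by
  decide

def pentagonKernel (s : ℝ) (d : ZMod 5) : ℝ :=
  if d = 0 then 1 else if d = 1 ∨ d = -1 then s else 0

theorem pentagonKernel_nonneg {s : ℝ} (hs : 0 ≤ s) (d : ZMod 5) : 0 ≤ pentagonKernel s d := by
  unfold pentagonKernel; split_ifs <;> norm_num [hs]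

theorem pentagonKernel_le_rpow {s t r : ℝ} (hst : s ≤ t ^ r) (d : ZMod 5) :
    pentagonKernel s d ≤ pentagonKernel t d ^ r := by
  unfold pentagonKernel
  split_ifs
  · simp
  · exact hst
  · exact rpow_nonneg le_rfl _

theorem pentagonKernel_mul_two_mul (s : ℝ) (d : ZMod 5) :
    pentagonKernel s d * pentagonKernel s (2 * d) = if d = 0 then 1 else 0 := by
  rcases zmod_five_cases d with rfl | rfl | rfl | rfl | rfl <;> simp +decide [pentagonKernel]

theorem g1_five_eq {ε : ℝ} (hε₀ : 0 ≤ ε) (hε₁ : ε ≤ 1) (a b : ZMod 5) :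
    g1 5 ε a b = pentagonKernel (alphaE ε) (a - b) := by
  have h₁ : √((1 - ε) * (1 - ε)) = 1 - ε := sqrt_mul_self (by linarith)
  have h₂ : √(ε * ε) = ε := sqrt_mul_self hε₀
  have h₃ : √((1 - ε) * ε) = alphaE ε := by rw [mul_comm]; rfl
  have sum_five (f : ZMod 5 → ℝ) : ∑ y, f y = f 0 + f 1 + f 2 + f 3 + f 4 := Fin.sum_univ_five f
  rcases zmod_five_cases a with rfl | rfl | rfl | rfl | rfl <;>
    rcases zmod_five_cases b with rfl | rfl | rfl | rfl | rfl <;>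
    simp +decide [g1, W, pentagonKernel, sum_five, alphaE, h₁, h₂, h₃]

noncomputable def pentagonAngle : ZMod 5 →+ Real.Angle :=
  ZMod.lift 5 ⟨zmultiplesHom Real.Angle ↑(2 * π / 5), by
    simp only [zmultiplesHom_apply, Nat.cast_ofNat, ← Real.Angle.coe_zsmul]
    norm_num [mul_div_cancel₀]⟩

theorem pentagonAngle_intCast (k : ℤ) : pentagonAngle k = ↑(k * (2 * π / 5)) := by
  rw [pentagonAngle, ZMod.lift_coe, zmultiplesHom_apply, ← Real.Angle.coe_zsmul, zsmul_eq_mul]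

theorem cos_pentagonAngle (d : ZMod 5) : (pentagonAngle d).cos =
    if d = 0 then 1 else if d = 1 ∨ d = -1 then (√5 - 1) / 4 else -(1 + √5) / 4 := by
  have one : (pentagonAngle 1).cos = (√5 - 1) / 4 := by
    rw [← Int.cast_one, pentagonAngle_intCast, Real.Angle.cos_coe, Int.cast_one, one_mul,
      show 2 * π / 5 = 2 * (π / 5) by ring, cos_two_mul, cos_pi_div_five]
    nlinarith [sq_sqrt (show (0:ℝ) ≤ 5 by norm_num)]
  have two : (pentagonAngle 2).cos = -(1 + √5) / 4 := by
    rw [← Int.cast_two, pentagonAngle_intCast, Real.Angle.cos_coe, Int.cast_two,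
      show 2 * (2 * π / 5) = π - π / 5 by ring, cos_pi_sub, cos_pi_div_five, neg_div]
  rcases zmod_five_cases d with rfl | rfl | rfl | rfl | rfl
  · simp
  · simp +decide [one]
  · simp +decide [two]
  · rw [show (3 : ZMod 5) = -2 by decide, map_neg, Real.Angle.cos_neg, two]; simp +decide
  · rw [show (4 : ZMod 5) = -1 by decide, map_neg, Real.Angle.cos_neg, one]; simp +decide

noncomputable def pentagonUmbrella : Fin 3 → ZMod 5 → ℝ
  | 0, _ => √(√5)⁻¹
  | 1, a => √(1 - (√5)⁻¹) * (pentagonAngle a).cos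
  | 2, a => √(1 - (√5)⁻¹) * (pentagonAngle a).sin

theorem sum_pentagonUmbrella_mul (a b : ZMod 5) :
    ∑ t, pentagonUmbrella t a * pentagonUmbrella t b = pentagonKernel ((√5 - 1) / 2) (a - b) := by
  have h5 : √5 * √5 = 5 := mul_self_sqrt (by norm_num)
  have h5pos : 0 < √5 := by positivity
  have inv_le : (√5)⁻¹ ≤ 1 := inv_le_one_of_one_le₀ (by nlinarith)
  have gram : ∑ t, pentagonUmbrella t a * pentagonUmbrella t b
      = (√5)⁻¹ + (1 - (√5)⁻¹) * (pentagonAngle (a - b)).cos := by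
    rw [Fin.sum_univ_three, map_sub, sub_eq_add_neg (pentagonAngle a), Real.Angle.cos_add,
      Real.Angle.cos_neg, Real.Angle.sin_neg]
    simp only [pentagonUmbrella]
    linear_combination mul_self_sqrt (inv_nonneg.2 h5pos.le) + ((pentagonAngle a).cos *
      (pentagonAngle b).cos + (pentagonAngle a).sin * (pentagonAngle b).sin) *
        mul_self_sqrt (sub_nonneg.2 inv_le)
  rw [gram, cos_pentagonAngle, pentagonKernel]
  split_ifs <;> field_simp <;> nlinarith

theorem one_div_two_mul_cos_pi_div_five : 1 / (2 * cos (π / 5)) = (√5 - 1) / 2 := by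
  have h5 : √5 * √5 = 5 := mul_self_sqrt (by norm_num)
  rw [cos_pi_div_five]
  field_simp
  nlinarith

theorem inv_sqrt_five_pow_le_Qn {n : ℕ} {ε ρ : ℝ} (hε₀ : 0 ≤ ε) (hε₁ : ε ≤ 1)
    (hα : (√5 - 1) / 2 ≤ alphaE ε ^ (1 / ρ)) {P : (Fin n → ZMod 5) → ℝ}
    (hP₀ : ∀ x, 0 ≤ P x) (hP₁ : ∑ x, P x = 1) :
    (√5 ^ n)⁻¹ ≤ Qn 5 n ε ρ P := by
  have umbrella_nonneg (a b : ZMod 5) :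
      0 ≤ ∑ t, pentagonUmbrella t a * pentagonUmbrella t b := by
    rw [sum_pentagonUmbrella_mul]
    have : 1 ≤ √5 := one_le_sqrt.2 (by norm_num)
    exact pentagonKernel_nonneg (by linarith) _
  have umbrella_le (a b : ZMod 5) :
      ∑ t, pentagonUmbrella t a * pentagonUmbrella t b ≤ g1 5 ε a b ^ (1 / ρ) := by
    rw [sum_pentagonUmbrella_mul, g1_five_eq hε₀ hε₁]
    exact pentagonKernel_le_rpow hα _
  calc (√5 ^ n)⁻¹ = (∑ x, P x * ∏ k, pentagonUmbrella 0 (x k)) ^ 2 := by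
        simp only [pentagonUmbrella, Finset.prod_const, Finset.card_univ, Fintype.card_fin,
          ← Finset.sum_mul, hP₁, one_mul]
        rw [← pow_mul, mul_comm, pow_mul, sq_sqrt (by positivity), inv_pow]
    _ ≤ ∑ x, ∑ x', P x * P x' * ∏ k, ∑ t, pentagonUmbrella t (x k) * pentagonUmbrella t (x' k) :=
        sq_sum_mul_prod_le_sum_sum_mul_prod_gram _ _ _
    _ ≤ Qn 5 n ε ρ P := by
        unfold Qn gn
        gcongr with x _ x' _
        · exact mul_nonneg (hP₀ x) (hP₀ x')
        · rw [← Real.finsetProd_rpow _ _ fun k _ => ?_]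
          · exact Finset.prod_le_prod (fun k _ => umbrella_nonneg _ _) fun k _ => umbrella_le _ _
          · exact Finset.sum_nonneg fun _ _ => sqrt_nonneg _

def pentagonCodeword {m : ℕ} (u : Fin m → ZMod 5) : Fin (m + m) → ZMod 5 :=
  Fin.append u fun i => 2 * u i

theorem gn_pentagonCodeword {m : ℕ} {ε : ℝ} (hε₀ : 0 ≤ ε) (hε₁ : ε ≤ 1)
    (u u' : Fin m → ZMod 5) :
    gn 5 (m + m) ε (pentagonCodeword u) (pentagonCodeword u') = if u = u' then 1 else 0 := by
  rw [pentagonCodeword, pentagonCodeword, gn_append, gn, gn, ← Finset.prod_mul_distrib]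
  simp only [g1_five_eq hε₀ hε₁, ← mul_sub, pentagonKernel_mul_two_mul, sub_eq_zero,
    Fintype.prod_boole]
  simp [funext_iff]

theorem exists_Qn_five_eq {m : ℕ} {ε ρ : ℝ} (hε₀ : 0 ≤ ε) (hε₁ : ε ≤ 1) (hρ : ρ ≠ 0) :
    ∃ P : (Fin (m + m) → ZMod 5) → ℝ,
      (∀ x, 0 ≤ P x) ∧ ∑ x, P x = 1 ∧ Qn 5 (m + m) ε ρ P = (√5 ^ (m + m))⁻¹ := by
  set w : ℝ := (5 ^ m)⁻¹
  have hw : (5 : ℝ) ^ m * w = 1 := mul_inv_cancel₀ (by positivity)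
  refine ⟨fun x => ∑ u, if pentagonCodeword u = x then w else 0,
    fun x => Finset.sum_nonneg fun u _ => by positivity, ?_, ?_⟩
  · simpa [hw] using sum_pushforward_mul (pentagonCodeword (m := m)) (fun _ => w) 1
  · rw [Qn, sum_sum_pushforward_mul]
    have hρ' : 1 / ρ ≠ 0 := one_div_ne_zero hρ
    simp only [gn_pentagonCodeword hε₀ hε₁, apply_ite (· ^ (1 / ρ)), one_rpow, zero_rpow hρ',
      mul_ite, mul_one, mul_zero, Finset.sum_ite_eq, Finset.mem_univ, if_true, Finset.sum_const,
      Finset.card_univ, Fintype.card_fun, ZMod.card, Fintype.card_fin, nsmul_eq_mul]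
    rw [← two_mul, pow_mul, sq_sqrt (by norm_num), ← mul_assoc]
    push_cast
    rw [hw, one_mul]

theorem stmt3 (n : ℕ) (hne : Even n)
    (ε ρ : ℝ) (hε : 0 < ε) (hε' : ε ≤ 1 / 2) (hρ : 1 ≤ ρ)
    (hcond : 1 / (2 * Real.cos (Real.pi / 5)) ≤ alphaE ε ^ (1 / ρ)) :
    IsLeast
      {v : ℝ | ∃ P : (Fin n → ZMod 5) → ℝ,
        (∀ x, 0 ≤ P x) ∧ (∑ x, P x = 1) ∧ v = Qn 5 n ε ρ P}
      ((Real.sqrt 5 ^ n)⁻¹) := by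
  obtain ⟨m, rfl⟩ := hne
  have hε₁ : ε ≤ 1 := by linarith
  refine ⟨?_, ?_⟩
  · obtain ⟨P, hP₀, hP₁, hQ⟩ := exists_Qn_five_eq (m := m) hε.le hε₁ (by positivity : ρ ≠ 0)
    exact ⟨P, hP₀, hP₁, hQ.symm⟩
  · rintro v ⟨P, hP₀, hP₁, rfl⟩
    rw [one_div_two_mul_cos_pi_div_five] at hcond
    exact inv_sqrt_five_pow_le_Qn hε.le hε₁ hcond hP₀ hP₁
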